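/- Let k be a natural number and let h : {0,1}^k → ℝ be any contingency table. Then for every j ∈ {0,1}^k, the marginal table of h on j lies in the span of the projected Fourier basis vectors indexed by γ ⪯ j; precisely, C^j h = Σ_{γ ⪯ j} ⟨f^γ, h⟩ · (C^j f^γ). -/

import Mathlib

/-!
Over the subcube `{γ' ⪯ j}` the Fourier vectors satisfy the dual orthogonality relation
`∑_{γ' ⪯ j} f^{γ'}_η f^{γ'}_μ = 2^{|j| - k}` if `η ∧ j = μ ∧ j` and `0` otherwise, since the sum
factorises over the coordinates. Every fibre of `η ↦ η ∧ j` has `2^{k - |j|}` points, so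
`∑_{γ' ⪯ j} f^{γ'}_η (C^j f^{γ'})_γ` is the indicator of `η ∧ j = γ`; pairing it with `h` gives
`(C^j h)_γ`.
-/

open Finset

/-- `⟨γ,j⟩ = Σ_i γ_i j_i` on the Boolean hypercube `{0,1}^k`. -/
def cubeInner {k : ℕ} (γ j : Fin k → Bool) : ℕ :=
  (Finset.univ.filter fun i => γ i = true ∧ j i = true).card

/-- The Fourier basis vector `f^j`, with `f^j_γ = (−1)^{⟨γ,j⟩}·2^{−k/2}`. -/
noncomputable def cubeFourier {k : ℕ} (j γ : Fin k → Bool) : ℝ :=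
  (-1 : ℝ) ^ cubeInner γ j * (2 : ℝ) ^ (-(k : ℝ) / 2)

/-- The inner product of two tables, `⟨f,h⟩ = Σ_η f_η h_η`. -/
noncomputable def tdot {k : ℕ} (f h : (Fin k → Bool) → ℝ) : ℝ := ∑ η, f η * h η

/-- Coordinatewise product (meet) `η ∧ j` on `{0,1}^k`. -/
def meet {k : ℕ} (η j : Fin k → Bool) : Fin k → Bool := fun i => η i && j i

/-- The marginalisation operator: `(C^j h)_γ = Σ_{η : η ∧ j = γ} h_η`. -/
noncomputable def proj {k : ℕ} (j : Fin k → Bool) (h : (Fin k → Bool) → ℝ)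
    (γ : Fin k → Bool) : ℝ :=
  ∑ η ∈ Finset.univ.filter (fun η => meet η j = γ), h η

/-- `γ ⪯ j` iff `γ_i ≤ j_i` for all `i`. -/
def cubeLe {k : ℕ} (γ j : Fin k → Bool) : Prop := ∀ i, γ i ≤ j i

instance {k : ℕ} (j : Fin k → Bool) : DecidablePred (fun γ => cubeLe γ j) :=
  fun γ => inferInstanceAs (Decidable (∀ i, γ i ≤ j i))

section

variable {k : ℕ}

lemma neg_one_pow_cubeInner (η γ : Fin k → Bool) :
    (-1 : ℝ) ^ cubeInner η γ = ∏ i, if η i && γ i then -1 else 1 := by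
  rw [cubeInner, ← prod_const, prod_filter]
  exact prod_congr rfl fun i _ => by cases η i <;> cases γ i <;> simp

lemma cubeFourier_mul_cubeFourier (γ η μ : Fin k → Bool) :
    cubeFourier γ η * cubeFourier γ μ =
      (∏ i, (if η i && γ i then -1 else 1) * (if μ i && γ i then -1 else 1)) / 2 ^ k := by
  have hscale : (2 : ℝ) ^ (-(k : ℝ) / 2) * (2 : ℝ) ^ (-(k : ℝ) / 2) = (2 ^ k)⁻¹ := by
    rw [← Real.rpow_add two_pos, add_halves, Real.rpow_neg zero_le_two, Real.rpow_natCast]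
  rw [cubeFourier, cubeFourier, neg_one_pow_cubeInner, neg_one_pow_cubeInner,
    prod_mul_distrib, div_eq_mul_inv _ ((2 : ℝ) ^ k), ← hscale]
  ring

lemma filter_cubeLe_eq_piFinset (j : Fin k → Bool) :
    univ.filter (fun γ => cubeLe γ j) =
      Fintype.piFinset fun i => if j i then univ else {false} := by
  ext γ
  rw [mem_filter_univ, Fintype.mem_piFinset]
  refine forall_congr' fun i => ?_
  cases j i <;> cases γ i <;> simp

lemma filter_meet_eq_piFinset (j μ : Fin k → Bool) :
    univ.filter (fun η => meet η j = meet μ j) =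
      Fintype.piFinset fun i => if j i then {μ i} else univ := by
  ext η
  simp only [mem_filter_univ, Fintype.mem_piFinset, meet, funext_iff]
  refine forall_congr' fun i => ?_
  cases j i <;> cases η i <;> cases μ i <;> simp

lemma card_filter_meet_eq_meet_mul_two_pow (j μ : Fin k → Bool) :
    #(univ.filter fun η => meet η j = meet μ j) * 2 ^ #(univ.filter fun i => j i = true) =
      2 ^ k := by
  have hfactor : ∀ i, #(if j i then {μ i} else univ) = if j i = false then 2 else 1 := by
    intro i
    cases j i <;> rfl
  have hcard := card_filter_add_card_filter_not (s := univ) (p := fun i => j i = false)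
  simp only [Bool.not_eq_false, card_univ, Fintype.card_fin] at hcard
  simp only [filter_meet_eq_piFinset, Fintype.card_piFinset, hfactor, prod_ite, prod_const,
    one_pow, mul_one, ← pow_add, hcard]

lemma sum_cubeLe_cubeFourier_mul_cubeFourier (j η μ : Fin k → Bool) :
    ∑ γ ∈ univ.filter (fun γ => cubeLe γ j), cubeFourier γ η * cubeFourier γ μ =
      if meet η j = meet μ j then 2 ^ #(univ.filter fun i => j i = true) / 2 ^ k else 0 := by
  simp only [cubeFourier_mul_cubeFourier, ← sum_div, filter_cubeLe_eq_piFinset]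
  rw [← prod_univ_sum (fun i => if j i then univ else {false})
    (fun i b => (if η i && b then (-1 : ℝ) else 1) * (if μ i && b then -1 else 1))]
  have hfactor : ∀ i, ∑ b ∈ (if j i then univ else {false}),
      (if η i && b then (-1 : ℝ) else 1) * (if μ i && b then -1 else 1) =
        if (j i → η i = μ i) then (if j i then 2 else 1) else 0 := by
    intro i
    cases j i <;> cases η i <;> cases μ i <;> norm_num
  have hmeet : (∀ i ∈ univ, j i → η i = μ i) ↔ meet η j = meet μ j := by
    simp only [mem_univ, true_implies, meet, funext_iff]
    refine forall_congr' fun i => ?_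
    cases j i <;> cases η i <;> cases μ i <;> simp
  simp only [hfactor, prod_ite_zero, hmeet, prod_ite, prod_const, one_pow, mul_one, ite_div,
    zero_div]

lemma meet_eq_self_of_cubeLe {γ j : Fin k → Bool} (hγ : cubeLe γ j) : meet γ j = γ :=
  funext fun i => by
    show (γ i && j i) = γ i
    have := hγ i
    revert this
    cases γ i <;> cases j i <;> decide

lemma sum_cubeLe_cubeFourier_mul_proj {γ j : Fin k → Bool} (hγ : cubeLe γ j)
    (η : Fin k → Bool) :
    ∑ γ' ∈ univ.filter (fun γ' => cubeLe γ' j),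
        cubeFourier γ' η * proj j (cubeFourier γ') γ =
      if meet η j = γ then 1 else 0 := by
  have hscale : (#(univ.filter fun μ => meet μ j = γ) : ℝ) *
      (2 ^ #(univ.filter fun i => j i = true) / 2 ^ k) = 1 := by
    rw [mul_div_assoc', div_eq_one_iff_eq (by positivity)]
    exact_mod_cast meet_eq_self_of_cubeLe hγ ▸ card_filter_meet_eq_meet_mul_two_pow j γ
  simp only [proj, mul_sum]
  rw [sum_comm, sum_congr rfl fun μ hμ => by
    rw [sum_cubeLe_cubeFourier_mul_cubeFourier, (mem_filter_univ _).1 hμ]]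
  rw [sum_const, nsmul_eq_mul, mul_ite, hscale, mul_zero]

end

/-- For any contingency table `h : {0,1}^k → ℝ` and any `j ∈ {0,1}^k`, the marginal
table of `h` on `j` satisfies `C^j h = Σ_{γ ⪯ j} ⟨f^γ, h⟩ · (C^j f^γ)`. -/
theorem stmt_7 (k : ℕ) (h : (Fin k → Bool) → ℝ) (j : Fin k → Bool)
    (γ : Fin k → Bool) (hγ : cubeLe γ j) :
    proj j h γ =
      ∑ γ' ∈ Finset.univ.filter (fun γ' => cubeLe γ' j),
        tdot (cubeFourier γ') h * proj j (cubeFourier γ') γ := by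
  calc proj j h γ = ∑ η, h η * if meet η j = γ then 1 else 0 := by
        simp only [proj, mul_ite, mul_one, mul_zero, sum_filter]
    _ = ∑ η, ∑ γ' ∈ univ.filter (fun γ' => cubeLe γ' j),
          h η * (cubeFourier γ' η * proj j (cubeFourier γ') γ) := by
        simp only [← sum_cubeLe_cubeFourier_mul_proj hγ, mul_sum]
    _ = _ := by
        rw [sum_comm]
        simp only [tdot, sum_mul]
        exact sum_congr rfl fun _ _ => sum_congr rfl fun _ _ => by ring
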